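/- If α = ω^{δ_n}·s_n + … + ω^{δ_1}·s_1 + m is an infinite ordinal presented in Cantor normal form, where n, s_1, …, s_n are positive natural numbers, 0 < δ_1 < … < δ_n are ordinals and m ∈ ω, then the poset ⟨P(α), ⊆⟩ is order-isomorphic to the product ∏_{i=1}^{n} (⟨P(ω^{δ_i}), ⊆⟩)^{s_i}, where products of posets carry the coordinatewise order. -/

import Mathlib

open Ordinal Set

/-- The set of copies of an ordinal `a`: subsets of the interval `[0, a)` that are
ranges of order-embeddings of `Iio a` into itself. -/
def Copies (a : Ordinal) : Set (Set Ordinal) :=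
  {A | ∃ f : Set.Iio a ↪o Set.Iio a, A = Subtype.val '' Set.range ⇑f}

/-!
If `a` is additively principal and `b < a + b`, every self-embedding `g` of `a + b` maps `[0, a)`
into itself: if `x < a ≤ g x`, then `y ↦ g (x + y) - a` would embed `x + (a + b) = a + b` into `b`.
Since moreover `x ≤ g x`, a copy of `a + b` is exactly a copy of `a` followed by a translate of a
copy of `b`, so `P(a + b) ≅ P(a) × P(b)`. With `a = ω ^ δ` this peels the Cantor normal form off
one summand at a time, from the largest exponent down; the finite tail `m` contributes nothing,
since `P(m)` is a single point.
-/

def OrderIso.prodCongr {α β γ δ : Type*} [Preorder α] [Preorder β] [Preorder γ] [Preorder δ]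
    (e₁ : α ≃o β) (e₂ : γ ≃o δ) : α × γ ≃o β × δ where
  toEquiv := e₁.toEquiv.prodCongr e₂.toEquiv
  map_rel_iff' := by simp [Prod.le_def]

def OrderIso.uniqueProd (α β : Type*) [Preorder α] [Unique α] [Preorder β] : α × β ≃o β where
  toEquiv := Equiv.uniqueProd β α
  map_rel_iff' := by simp [Prod.le_def]

section SelfMapsIio

variable {c : Ordinal} {g : Ordinal → Ordinal}

theorem le_apply_of_strictMonoOn_Iio (hmono : StrictMonoOn g (Iio c))
    (hmaps : MapsTo g (Iio c) (Iio c)) {x : Ordinal} (hx : x < c) : x ≤ g x := by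
  induction x using WellFoundedLT.induction with
  | _ x ih =>
    by_contra! hgx
    exact (hmono (hmaps hx) hx hgx).not_ge (ih _ hgx (hmaps hx))

theorem le_of_strictMonoOn_Iio {d : Ordinal} (hmono : StrictMonoOn g (Iio c))
    (hmaps : MapsTo g (Iio c) (Iio d)) : c ≤ d := by
  by_contra! hdc
  have hmaps' : MapsTo g (Iio c) (Iio c) := hmaps.mono_right (Iio_subset_Iio hdc.le)
  exact (le_apply_of_strictMonoOn_Iio hmono hmaps' hdc).not_gt (hmaps hdc)

theorem strictMonoOn_sub_const (a : Ordinal) : StrictMonoOn (· - a) (Ici a) := by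
  intro x hx y hy hxy
  rwa [← add_lt_add_iff_left a, Ordinal.add_sub_cancel_of_le hx, Ordinal.add_sub_cancel_of_le hy]

theorem mapsTo_Iio_of_isPrincipal_add {a b : Ordinal} (ha : IsPrincipal (· + ·) a)
    (hb : b < a + b) (hmono : StrictMonoOn g (Iio (a + b)))
    (hmaps : MapsTo g (Iio (a + b)) (Iio (a + b))) : MapsTo g (Iio a) (Iio a) := by
  intro x hx
  rw [mem_Iio]
  by_contra! hax
  have hshift : MapsTo (x + ·) (Iio (a + b)) (Iio (a + b)) := fun y hy => by
    simpa only [mem_Iio, ← add_assoc, ha.add_eq_right hx] using add_lt_add_right hy x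
  have hx' : x ∈ Iio (a + b) := lt_of_lt_of_le (mem_Iio.1 hx) le_self_add
  have hge : ∀ y ∈ Iio (a + b), a ≤ g (x + y) := fun y hy =>
    hax.trans (hmono.monotoneOn hx' (hshift hy) le_self_add)
  refine hb.not_ge (le_of_strictMonoOn_Iio (g := fun y => g (x + y) - a) ?_ ?_)
  · intro y hy z hz hyz
    exact strictMonoOn_sub_const a (hge y hy) (hge z hz)
      (hmono (hshift hy) (hshift hz) (add_lt_add_right hyz x))
  · intro y hy
    exact (sub_lt_of_le (hge y hy)).2 (hmaps (hshift hy))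

end SelfMapsIio

theorem Iio_add_eq_union_image_add (a b : Ordinal) : Iio (a + b) = Iio a ∪ (a + ·) '' Iio b := by
  ext x
  constructor
  · intro hx
    rcases lt_or_ge x a with hxa | hax
    · exact Or.inl hxa
    · exact Or.inr ⟨x - a, (sub_lt_of_le hax).2 hx, Ordinal.add_sub_cancel_of_le hax⟩
  · rintro (hxa | ⟨y, hy, rfl⟩)
    · exact (mem_Iio.1 hxa).trans_le le_self_add
    · exact add_lt_add_right hy a

theorem inter_Iio_union_image_preimage_add (a : Ordinal) (A : Set Ordinal) :
    A ∩ Iio a ∪ (a + ·) '' ((a + ·) ⁻¹' A) = A := by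
  refine union_subset inter_subset_left (image_preimage_subset _ _) |>.antisymm fun x hx => ?_
  rcases lt_or_ge x a with hxa | hax
  · exact Or.inl ⟨hx, hxa⟩
  · refine Or.inr ⟨x - a, ?_, Ordinal.add_sub_cancel_of_le hax⟩
    rwa [mem_preimage, Ordinal.add_sub_cancel_of_le hax]

theorem union_image_add_inter_Iio {a : Ordinal} {B : Set Ordinal} (hB : B ⊆ Iio a)
    (C : Set Ordinal) : (B ∪ (a + ·) '' C) ∩ Iio a = B := by
  refine Subset.antisymm ?_ (subset_inter subset_union_left hB)
  rintro x ⟨hx | ⟨y, -, rfl⟩, hxa⟩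
  · exact hx
  · exact (not_lt.2 (le_self_add : a ≤ a + y) hxa).elim

theorem preimage_add_union_image_add {a : Ordinal} {B : Set Ordinal} (hB : B ⊆ Iio a)
    (C : Set Ordinal) : (a + ·) ⁻¹' (B ∪ (a + ·) '' C) = C := by
  have hB' : (a + ·) ⁻¹' B = ∅ :=
    eq_empty_of_forall_notMem fun y hy => not_lt.2 (le_self_add : a ≤ a + y) (hB hy)
  rw [preimage_union, hB', empty_union, preimage_image_eq _ (add_right_injective a)]

theorem mem_copies_iff {c : Ordinal} {A : Set Ordinal} :
    A ∈ Copies c ↔ ∃ g : Ordinal → Ordinal,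
      StrictMonoOn g (Iio c) ∧ MapsTo g (Iio c) (Iio c) ∧ g '' Iio c = A := by
  constructor
  · rintro ⟨f, rfl⟩
    refine ⟨fun x => if h : x < c then f ⟨x, h⟩ else 0, ?_, ?_, ?_⟩
    · intro x hx y hy hxy
      have := f.strictMono (show (⟨x, hx⟩ : Iio c) < ⟨y, hy⟩ from hxy)
      simp only [dif_pos (mem_Iio.1 hx), dif_pos (mem_Iio.1 hy)]
      exact this
    · intro x hx
      simp [dif_pos (mem_Iio.1 hx)]
    · ext y
      constructor
      · rintro ⟨x, hx, rfl⟩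
        exact ⟨f ⟨x, hx⟩, ⟨_, rfl⟩, by simp only [dif_pos (show x < c from hx)]⟩
      · rintro ⟨_, ⟨x, rfl⟩, rfl⟩
        exact ⟨x, x.2, dif_pos x.2⟩
  · rintro ⟨g, hmono, hmaps, rfl⟩
    refine ⟨.ofStrictMono (hmaps.restrict g _ _) fun x y hxy => hmono x.2 y.2 hxy, ?_⟩
    change _ = Subtype.val '' range (hmaps.restrict g _ _)
    rw [MapsTo.range_restrict, image_preimage_eq_inter_range, Subtype.range_coe]
    exact (inter_eq_left.2 (image_subset_iff.2 hmaps)).symm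

theorem Iio_mem_copies (c : Ordinal) : Iio c ∈ Copies c :=
  mem_copies_iff.2 ⟨id, strictMonoOn_id, mapsTo_id _, image_id _⟩

theorem subset_Iio_of_mem_copies {c : Ordinal} {A : Set Ordinal} (hA : A ∈ Copies c) :
    A ⊆ Iio c := by
  obtain ⟨g, -, hmaps, rfl⟩ := mem_copies_iff.1 hA
  exact image_subset_iff.2 hmaps

section Split

variable {a b : Ordinal} {A B C : Set Ordinal}

theorem inter_Iio_mem_copies (ha : IsPrincipal (· + ·) a) (hb : b < a + b)
    (hA : A ∈ Copies (a + b)) : A ∩ Iio a ∈ Copies a := by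
  obtain ⟨g, hmono, hmaps, rfl⟩ := mem_copies_iff.1 hA
  have hsub : Iio a ⊆ Iio (a + b) := Iio_subset_Iio le_self_add
  have hpres := mapsTo_Iio_of_isPrincipal_add ha hb hmono hmaps
  refine mem_copies_iff.2 ⟨g, hmono.mono hsub, hpres, ?_⟩
  refine (subset_inter (image_mono hsub) (image_subset_iff.2 hpres)).antisymm ?_
  rintro _ ⟨⟨x, hx, rfl⟩, hgx⟩
  exact ⟨x, (le_apply_of_strictMonoOn_Iio hmono hmaps hx).trans_lt hgx, rfl⟩

theorem preimage_add_mem_copies (ha : IsPrincipal (· + ·) a) (hb : b < a + b)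
    (hA : A ∈ Copies (a + b)) : (a + ·) ⁻¹' A ∈ Copies b := by
  obtain ⟨g, hmono, hmaps, rfl⟩ := mem_copies_iff.1 hA
  have hpres := mapsTo_Iio_of_isPrincipal_add ha hb hmono hmaps
  have hshift : MapsTo (a + ·) (Iio b) (Iio (a + b)) := fun y hy => add_lt_add_right hy a
  have hge : ∀ y ∈ Iio b, a ≤ g (a + y) := fun y hy =>
    le_self_add.trans (le_apply_of_strictMonoOn_Iio hmono hmaps (hshift hy))
  refine mem_copies_iff.2 ⟨fun y => g (a + y) - a, ?_, ?_, ?_⟩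
  · intro y hy z hz hyz
    exact strictMonoOn_sub_const a (hge y hy) (hge z hz)
      (hmono (hshift hy) (hshift hz) (add_lt_add_right hyz a))
  · intro y hy
    exact (sub_lt_of_le (hge y hy)).2 (hmaps (hshift hy))
  · ext y
    constructor
    · rintro ⟨z, hz, rfl⟩
      show a + (g (a + z) - a) ∈ g '' Iio (a + b)
      rw [Ordinal.add_sub_cancel_of_le (hge z hz)]
      exact mem_image_of_mem g (hshift hz)
    · rintro ⟨x, hx, hgx⟩
      have hax : a ≤ x := by
        by_contra! hxa
        exact (mem_Iio.1 (hpres hxa)).not_ge (hgx.symm ▸ le_self_add)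
      refine ⟨x - a, (sub_lt_of_le hax).2 hx, ?_⟩
      simp only [Ordinal.add_sub_cancel_of_le hax, hgx, Ordinal.add_sub_cancel]

theorem union_image_add_mem_copies (hB : B ∈ Copies a) (hC : C ∈ Copies b) :
    B ∪ (a + ·) '' C ∈ Copies (a + b) := by
  obtain ⟨g₁, hmono₁, hmaps₁, rfl⟩ := mem_copies_iff.1 hB
  obtain ⟨g₂, hmono₂, hmaps₂, rfl⟩ := mem_copies_iff.1 hC
  have hsub : ∀ x ∈ Iio (a + b), a ≤ x → x - a ∈ Iio b := fun x hx hax => (sub_lt_of_le hax).2 hx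
  refine mem_copies_iff.2 ⟨fun x => if x < a then g₁ x else a + g₂ (x - a), ?_, ?_, ?_⟩
  · intro x hx y hy hxy
    by_cases hxa : x < a
    · by_cases hya : y < a
      · simpa only [if_pos hxa, if_pos hya] using hmono₁ hxa hya hxy
      · simpa only [if_pos hxa, if_neg hya] using (mem_Iio.1 (hmaps₁ hxa)).trans_le le_self_add
    · have hya : ¬ y < a := fun hya => hxa (hxy.trans hya)
      simp only [if_neg hxa, if_neg hya]
      exact add_lt_add_right (hmono₂ (hsub x hx (not_lt.1 hxa)) (hsub y hy (not_lt.1 hya))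
        (strictMonoOn_sub_const a (not_lt.1 hxa) (not_lt.1 hya) hxy)) a
  · intro x hx
    by_cases hxa : x < a
    · simpa only [if_pos hxa, mem_Iio] using (mem_Iio.1 (hmaps₁ hxa)).trans_le le_self_add
    · simpa only [if_neg hxa, mem_Iio] using add_lt_add_right (hmaps₂ (hsub x hx (not_lt.1 hxa))) a
  · rw [Iio_add_eq_union_image_add, image_union, image_image, image_image]
    congr 1
    · exact image_congr fun x hx => if_pos hx
    · refine image_congr fun y _ => ?_
      simp only [if_neg (not_lt.2 (le_self_add : a ≤ a + y)), Ordinal.add_sub_cancel]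

def copiesAddIso (ha : IsPrincipal (· + ·) a) (hb : b < a + b) :
    Copies (a + b) ≃o Copies a × Copies b where
  toFun A := (⟨A.1 ∩ Iio a, inter_Iio_mem_copies ha hb A.2⟩,
    ⟨(a + ·) ⁻¹' A.1, preimage_add_mem_copies ha hb A.2⟩)
  invFun P := ⟨P.1.1 ∪ (a + ·) '' P.2.1, union_image_add_mem_copies P.1.2 P.2.2⟩
  left_inv A := Subtype.ext (inter_Iio_union_image_preimage_add a A.1)
  right_inv P :=
    have hB := subset_Iio_of_mem_copies P.1.2
    Prod.ext (Subtype.ext (union_image_add_inter_Iio hB _))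
      (Subtype.ext (preimage_add_union_image_add hB _))
  map_rel_iff' := by
    rintro ⟨A, hA⟩ ⟨A', hA'⟩
    simp only [Equiv.coe_fn_mk, Prod.mk_le_mk, Subtype.mk_le_mk]
    constructor
    · rintro ⟨h₁, h₂⟩
      rw [← inter_Iio_union_image_preimage_add a A, ← inter_Iio_union_image_preimage_add a A']
      exact union_subset_union h₁ (image_mono h₂)
    · exact fun h => ⟨inter_subset_inter_left _ h, preimage_mono h⟩

end Split

theorem lt_omega0_opow_add_self {b e : Ordinal} (h : b < ω ^ (e + 1)) : b < ω ^ e + b := by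
  refine lt_of_le_of_ne le_add_self fun heq => h.not_ge ?_
  rw [← Order.succ_eq_add_one, opow_succ]
  exact add_eq_right_iff_mul_omega0_le.1 heq.symm

noncomputable def copiesOpowMulAddIso (e R : Ordinal) (hR : R < ω ^ (e + 1)) :
    ∀ k : ℕ, Copies (ω ^ e * k + R) ≃o (Fin k → Copies (ω ^ e)) × Copies R
  | 0 => (OrderIso.setCongr _ _ (by simp)).trans (OrderIso.uniqueProd _ _).symm
  | k + 1 =>
    have hk : ω ^ e * ((k + 1 : ℕ) : Ordinal) + R = ω ^ e + (ω ^ e * k + R) := by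
      rw [Nat.add_comm, Nat.cast_add, Nat.cast_one, mul_add, mul_one, add_assoc]
    have hlt : ω ^ e * k + R < ω ^ (e + 1) :=
      isPrincipal_add_omega0_opow _ (opow_mul_lt_opow (natCast_lt_omega0 k) (lt_add_one e)) hR
    (OrderIso.setCongr _ _ (congrArg Copies hk)).trans <|
      (copiesAddIso (isPrincipal_add_omega0_opow e) (lt_omega0_opow_add_self hlt)).trans <|
      (OrderIso.prodCongr (.refl _) (copiesOpowMulAddIso e R hR k)).trans <|
      (OrderIso.prodAssoc _ _ _).symm.trans <|
      OrderIso.prodCongr (Fin.consOrderIso fun _ => Copies (ω ^ e)) (.refl _)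

theorem copies_eq_Iio_of_le_one {c : Ordinal} (hc : c ≤ 1) {A : Set Ordinal}
    (hA : A ∈ Copies c) : A = Iio c := by
  obtain ⟨g, -, hmaps, rfl⟩ := mem_copies_iff.1 hA
  have hzero : ∀ x < c, x = 0 := fun x hx => Order.lt_one_iff.1 (hx.trans_le hc)
  conv_rhs => rw [← image_id (Iio c)]
  exact image_congr fun x hx => (hzero _ (hmaps hx)).trans (hzero x hx).symm

theorem subsingleton_copies_of_le_one {c : Ordinal} (hc : c ≤ 1) : Subsingleton (Copies c) :=
  ⟨fun A B => Subtype.ext ((copies_eq_Iio_of_le_one hc A.2).trans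
    (copies_eq_Iio_of_le_one hc B.2).symm)⟩

/-- `m = 1 + ⋯ + 1` with `1` additively principal, so `P(m) ≅ P(1) ^ m × P(0)`. -/
instance subsingleton_copies_natCast (m : ℕ) : Subsingleton (Copies m) := by
  have := subsingleton_copies_of_le_one (c := ω ^ (0 : Ordinal)) (by simp)
  have := subsingleton_copies_of_le_one (c := 0) zero_le_one
  let e : Copies m ≃o (Fin m → Copies (ω ^ (0 : Ordinal))) × Copies 0 :=
    (OrderIso.setCongr _ (Copies (ω ^ (0 : Ordinal) * m + 0)) (by simp)).trans
      (copiesOpowMulAddIso 0 0 (by simp) m)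
  exact e.toEquiv.subsingleton

noncomputable instance uniqueCopiesNatCast (m : ℕ) : Unique (Copies m) :=
  uniqueOfSubsingleton ⟨Iio m, Iio_mem_copies m⟩

theorem sum_map_reverse_finRange_succ {M : Type*} [AddMonoid M] {n : ℕ} (f : Fin (n + 1) → M) :
    ((List.finRange (n + 1)).reverse.map f).sum =
      f (Fin.last n) + ((List.finRange n).reverse.map (fun i => f i.castSucc)).sum := by
  simp [List.finRange_succ_last, List.map_reverse, Function.comp_def]

theorem sum_map_reverse_finRange_add_lt {n : ℕ} (δ : Fin n → Ordinal) (s : Fin n → ℕ)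
    {e R : Ordinal} (hδ : ∀ i, δ i < e) (hR : R < ω ^ e) :
    ((List.finRange n).reverse.map fun i => ω ^ δ i * (s i : Ordinal)).sum + R < ω ^ e := by
  induction n with
  | zero => simpa using hR
  | succ n ih =>
    rw [sum_map_reverse_finRange_succ, add_assoc]
    exact isPrincipal_add_omega0_opow e (opow_mul_lt_opow (natCast_lt_omega0 _) (hδ _))
      (ih _ _ fun i => hδ i.castSucc)

noncomputable def copiesCantorNormalFormIso (m : ℕ) :
    ∀ {n : ℕ} (δ : Fin n → Ordinal) (s : Fin n → ℕ), Monotone δ →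
      Copies (((List.finRange n).reverse.map fun i => ω ^ δ i * (s i : Ordinal)).sum + m) ≃o
        Π i, Fin (s i) → Copies (ω ^ δ i)
  | 0, _, _, _ => (OrderIso.setCongr _ (Copies m) (by simp)).trans (OrderIso.ofUnique _ _)
  | n + 1, δ, s, hδ =>
    have hlt := sum_map_reverse_finRange_add_lt (fun i => δ i.castSucc) (fun i => s i.castSucc)
      (e := δ (Fin.last n) + 1) (R := m)
      (fun i => Order.lt_add_one_iff.2 (hδ (Fin.castSucc_lt_last i).le))
      ((natCast_lt_omega0 m).trans_le (left_le_opow _ (zero_le.trans_lt (lt_add_one _))))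
    (OrderIso.setCongr _ _ (by rw [sum_map_reverse_finRange_succ, add_assoc])).trans <|
      (copiesOpowMulAddIso _ _ hlt (s (Fin.last n))).trans <|
      (OrderIso.prodCongr (.refl _)
        (copiesCantorNormalFormIso m (fun i => δ i.castSucc) (fun i => s i.castSucc)
          (hδ.comp Fin.strictMono_castSucc.monotone))).trans <|
      Fin.snocOrderIso fun i => Fin (s i) → Copies (ω ^ δ i)

theorem stmt4_general (n : ℕ) (δ : Fin n → Ordinal) (s : Fin n → ℕ) (m : ℕ)
    (hδ : StrictMono δ) (α : Ordinal)
    (hα : α = ((List.finRange n).reverse.map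
        (fun i => ω ^ δ i * (s i : Ordinal))).sum + (m : Ordinal)) :
    Nonempty (↥(Copies α) ≃o Π i : Fin n, Fin (s i) → ↥(Copies (ω ^ δ i))) := by
  subst hα
  exact ⟨copiesCantorNormalFormIso m δ s hδ.monotone⟩

/-- If `α = ω^{δ_n}·s_n + … + ω^{δ_1}·s_1 + m` is an infinite ordinal in Cantor
normal form (indices here run from `0` to `n-1`, with `δ` strictly increasing, so the
sum is taken in decreasing order of exponents), then the poset `⟨P(α), ⊆⟩` is
order-isomorphic to the product `∏_{i} (⟨P(ω^{δ_i}), ⊆⟩)^{s_i}` with the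
coordinatewise order. -/
theorem stmt4 (n : ℕ) (hn : 0 < n) (δ : Fin n → Ordinal) (s : Fin n → ℕ) (m : ℕ)
    (hδ0 : 0 < δ ⟨0, hn⟩) (hδ : StrictMono δ) (hs : ∀ i, 0 < s i)
    (α : Ordinal)
    (hα : α = ((List.finRange n).reverse.map
        (fun i => ω ^ δ i * (s i : Ordinal))).sum + (m : Ordinal))
    (hinf : ω ≤ α) :
    Nonempty (↥(Copies α) ≃o Π i : Fin n, Fin (s i) → ↥(Copies (ω ^ δ i))) :=
  stmt4_general n δ s m hδ α hα
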